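/- arXiv:1903.08295 — 6 statements merged into one kernel-verified Lean document; each statement's English description precedes it below -/
import Mathlib

section
/- Let a, b ≥ 2 be integers and r ≥ 0. Define S(a,b,r) = {m ∈ ℤ_{>0} : ℓ(a,b,m) ≤ r}. Then S(a,b,r) is a truncation set: if m ∈ S(a,b,r) and d is a positive divisor of m, then d ∈ S(a,b,r). -/
/- Scaling a representation `a * i + b * j = d` by the cofactor `k = m / d` gives a representation
`a * (i * k) + b * (j * k) = m`, injectively; since `a, b > 0` both solution sets are finite,
so this injection compares their cardinalities and `ℓ(a,b,d) ≤ ℓ(a,b,m)`. -/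

open Set

/-- ℓ(a,b,m): the number of pairs (i,j) of positive integers with a·i + b·j = m. -/
noncomputable def lcount (a b m : ℕ) : ℕ :=
  {q : ℕ × ℕ | 0 < q.1 ∧ 0 < q.2 ∧ a * q.1 + b * q.2 = m}.ncard

/-- The truncation set S(a,b,r). -/
def truncS (a b r : ℕ) : Set ℕ := {m | 0 < m ∧ lcount a b m ≤ r}

theorem finite_setOf_mul_add_mul_eq {a b : ℕ} (ha : 0 < a) (hb : 0 < b) (m : ℕ) :
    {q : ℕ × ℕ | 0 < q.1 ∧ 0 < q.2 ∧ a * q.1 + b * q.2 = m}.Finite := by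
  refine (Set.finite_Icc (0, 0) (m, m)).subset ?_
  rintro ⟨i, j⟩ ⟨-, -, hsum : a * i + b * j = m⟩
  have hi : i ≤ m := (Nat.le_mul_of_pos_left i ha).trans (by omega)
  have hj : j ≤ m := (Nat.le_mul_of_pos_left j hb).trans (by omega)
  exact ⟨⟨Nat.zero_le i, Nat.zero_le j⟩, ⟨hi, hj⟩⟩

theorem lcount_le_lcount_mul {a b : ℕ} (ha : 0 < a) (hb : 0 < b) (d : ℕ) {k : ℕ} (hk : 0 < k) :
    lcount a b d ≤ lcount a b (d * k) := by
  refine Set.ncard_le_ncard_of_injOn (fun q => (q.1 * k, q.2 * k)) ?_ ?_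
    (finite_setOf_mul_add_mul_eq ha hb _)
  · rintro ⟨i, j⟩ ⟨hi, hj, hsum⟩
    refine ⟨Nat.mul_pos hi hk, Nat.mul_pos hj hk, ?_⟩
    simp only [← hsum]
    ring
  · rintro ⟨i, j⟩ - ⟨i', j'⟩ - h
    simp only [Prod.mk.injEq, Nat.mul_right_cancel_iff hk] at h
    rw [h.1, h.2]

theorem lcount_le_lcount_of_dvd {a b : ℕ} (ha : 0 < a) (hb : 0 < b) {d m : ℕ} (hm : 0 < m)
    (hdvd : d ∣ m) : lcount a b d ≤ lcount a b m := by
  obtain ⟨k, rfl⟩ := hdvd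
  exact lcount_le_lcount_mul ha hb d (Nat.pos_of_mul_pos_left hm)

theorem stmt_1 (a b r : ℕ) (ha : 2 ≤ a) (hb : 2 ≤ b) (m d : ℕ)
    (hm : m ∈ truncS a b r) (hd : 0 < d) (hdvd : d ∣ m) : d ∈ truncS a b r :=
  ⟨hd, (lcount_le_lcount_of_dvd (by omega) (by omega) hm.1 hdvd).trans hm.2⟩
end

section
/- Let a, b ≥ 2 be coprime integers and let r ≥ 1. Then the number of positive integers m with ℓ(a,b,m) = r equals exactly a·b. -/
open Set

lemma repSet_finite (a b m : ℕ) (ha : 0 < a) (hb : 0 < b) :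
    {q : ℕ × ℕ | 0 < q.1 ∧ 0 < q.2 ∧ a * q.1 + b * q.2 = m}.Finite := by
  apply Set.Finite.subset (Set.finite_Icc (1,1) (m,m))
  rintro ⟨i,j⟩ ⟨hi, hj, h⟩
  simp only [Set.mem_Icc, Prod.le_def]
  refine ⟨⟨hi, hj⟩, ?_, ?_⟩ <;> nlinarith

lemma eq_of_mod_small {b i j : ℕ} (h : i % b = j % b) (h1 : 1 ≤ i) (h2 : i ≤ b)
    (h3 : 1 ≤ j) (h4 : j ≤ b) : i = j := by
  by_cases hi : i < b <;> by_cases hj : j < b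
  · rwa [Nat.mod_eq_of_lt hi, Nat.mod_eq_of_lt hj] at h
  · have hjb : j = b := by omega
    rw [Nat.mod_eq_of_lt hi, hjb, Nat.mod_self] at h; omega
  · have hib : i = b := by omega
    rw [hib, Nat.mod_self, Nat.mod_eq_of_lt hj] at h; omega
  · omega

lemma lcount_step (a b m : ℕ) (ha : 2 ≤ a) (hb : 2 ≤ b) (hab : Nat.Coprime a b)
    (hm : 0 < m) : lcount a b (m + a * b) = lcount a b m + 1 := by
  obtain ⟨x, -, hx⟩ := Nat.exists_mul_mod_eq_one_of_coprime hab (by omega)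
  have h1 : a * x ≡ 1 [MOD b] := by
    show a * x % b = 1 % b
    rw [Nat.one_mod_eq_one.mpr (by omega)]; exact hx
  obtain ⟨c, hc⟩ : ∃ c, (x * m) % b = c := ⟨_, rfl⟩
  have hcb : c < b := hc ▸ Nat.mod_lt _ (by omega)
  have hac : a * c ≡ m [MOD b] := by
    calc a * c ≡ a * (x * m) [MOD b] := (hc ▸ Nat.mod_modEq (x * m) b).mul_left a
    _ = (a * x) * m := by ring
    _ ≡ 1 * m [MOD b] := h1.mul_right m
    _ = m := by ring
  obtain ⟨i₀, hi₀⟩ : ∃ i₀, (if c = 0 then b else c) = i₀ := ⟨_, rfl⟩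
  have hi₀1 : 1 ≤ i₀ := by rw [← hi₀]; split <;> omega
  have hi₀b : i₀ ≤ b := by rw [← hi₀]; split <;> omega
  have hai : a * i₀ ≡ m [MOD b] := by
    by_cases h : c = 0
    · have hib : i₀ = b := by rw [← hi₀, if_pos h]
      have h2 : a * b ≡ a * c [MOD b] := by
        rw [h]
        show a * b % b = a * 0 % b
        simp [Nat.mul_mod_left]
      rw [hib]
      exact h2.trans hac
    · have hic : i₀ = c := by rw [← hi₀, if_neg h]
      rw [hic]; exact hac
  have hile : a * i₀ ≤ m + a * b :=
    le_trans (Nat.mul_le_mul_left a hi₀b) (Nat.le_add_left _ _)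
  have hdvd : b ∣ (m + a * b - a * i₀) := by
    have h2 : a * i₀ ≡ m + a * b [MOD b] := by
      calc a * i₀ ≡ m [MOD b] := hai
      _ ≡ m + a * b [MOD b] := (Nat.modEq_iff_dvd' (Nat.le_add_right _ _)).mpr
          ⟨a, by rw [Nat.add_sub_cancel_left, mul_comm]⟩
    exact (Nat.modEq_iff_dvd' hile).mp h2
  obtain ⟨j₀, hj₀⟩ : ∃ j₀, (m + a * b - a * i₀) / b = j₀ := ⟨_, rfl⟩
  have hj₀eq : b * j₀ = m + a * b - a * i₀ := hj₀ ▸ Nat.mul_div_cancel' hdvd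
  have hj₀1 : 1 ≤ j₀ := by
    rcases Nat.eq_zero_or_pos j₀ with h|h
    · rw [h, Nat.mul_zero] at hj₀eq
      have : a * i₀ ≤ a * b := Nat.mul_le_mul_left a hi₀b
      omega
    · exact h
  have hsum : a * i₀ + b * j₀ = m + a * b := by omega
  have hset : {q : ℕ × ℕ | 0 < q.1 ∧ 0 < q.2 ∧ a * q.1 + b * q.2 = m + a * b} =
      insert (i₀, j₀) ((fun q : ℕ × ℕ => (q.1 + b, q.2)) ''
        {q : ℕ × ℕ | 0 < q.1 ∧ 0 < q.2 ∧ a * q.1 + b * q.2 = m}) := by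
    ext ⟨i, j⟩
    simp only [Set.mem_setOf_eq, Set.mem_insert_iff, Set.mem_image, Prod.mk.injEq, Prod.exists]
    constructor
    · rintro ⟨hi, hj, hij⟩
      rcases Nat.lt_or_ge b i with hbi|hbi
      · right
        refine ⟨i - b, j, ⟨by omega, hj, ?_⟩, by omega, rfl⟩
        have h5 : a * (i - b) + a * b = a * i := by
          rw [← Nat.mul_add, Nat.sub_add_cancel hbi.le]
        omega
      · left
        have hmod2 : a * i ≡ a * i₀ [MOD b] := by
          calc a * i ≡ a * i + b * j [MOD b] := ((Nat.modEq_iff_dvd'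
            (Nat.le_add_right _ _)).mpr ⟨j, by rw [Nat.add_sub_cancel_left]⟩)
          _ = m + a * b := hij
          _ = a * i₀ + b * j₀ := hsum.symm
          _ ≡ a * i₀ [MOD b] := ((Nat.modEq_iff_dvd'
            (Nat.le_add_right _ _)).mpr ⟨j₀, by rw [Nat.add_sub_cancel_left]⟩).symm
        have hii : i ≡ i₀ [MOD b] := hmod2.cancel_left_of_coprime hab.symm
        have : i = i₀ := eq_of_mod_small hii hi hbi hi₀1 hi₀b
        subst this
        refine ⟨rfl, ?_⟩
        have : b * j = b * j₀ := by omega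
        exact Nat.eq_of_mul_eq_mul_left (by omega) this
    · rintro (⟨rfl, rfl⟩ | ⟨i', j', ⟨hi', hj', hij'⟩, rfl, rfl⟩)
      · exact ⟨hi₀1, hj₀1, hsum⟩
      · refine ⟨by omega, hj', ?_⟩
        have h5 : a * (i' + b) = a * i' + a * b := Nat.mul_add a i' b
        omega
  have hfin : {q : ℕ × ℕ | 0 < q.1 ∧ 0 < q.2 ∧ a * q.1 + b * q.2 = m}.Finite :=
    repSet_finite a b m (by omega) (by omega)
  have hinj : Function.Injective (fun q : ℕ × ℕ => (q.1 + b, q.2)) := by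
    rintro ⟨u, v⟩ ⟨u', v'⟩ h
    simp only [Prod.mk.injEq] at h
    exact Prod.ext (by omega) h.2
  have hnotmem : (i₀, j₀) ∉ ((fun q : ℕ × ℕ => (q.1 + b, q.2)) ''
      {q : ℕ × ℕ | 0 < q.1 ∧ 0 < q.2 ∧ a * q.1 + b * q.2 = m}) := by
    rintro ⟨⟨u, v⟩, ⟨hu, _, _⟩, heq⟩
    simp only [Prod.mk.injEq] at heq
    omega
  rw [lcount, hset, Set.ncard_insert_of_notMem hnotmem (hfin.image _),
    Set.ncard_image_of_injective _ hinj]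
  rfl

lemma lcount_le_one (a b m : ℕ) (ha : 2 ≤ a) (hb : 2 ≤ b) (hab : Nat.Coprime a b)
    (hm : m ≤ a * b) : lcount a b m ≤ 1 := by
  have hsub : {q : ℕ × ℕ | 0 < q.1 ∧ 0 < q.2 ∧ a * q.1 + b * q.2 = m}.Subsingleton := by
    rintro ⟨i, j⟩ ⟨hi, hj, hij⟩ ⟨i', j'⟩ ⟨hi', hj', hij'⟩
    dsimp only at hi hj hij hi' hj' hij'
    have hib : i < b := by nlinarith
    have hib' : i' < b := by nlinarith
    have h1 : a * i % b = m % b := by rw [← hij, Nat.add_mul_mod_self_left]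
    have h2 : a * i' % b = m % b := by rw [← hij', Nat.add_mul_mod_self_left]
    have hmod : a * i ≡ a * i' [MOD b] := h1.trans h2.symm
    have hii : i % b = i' % b := hmod.cancel_left_of_coprime hab.symm
    rw [Nat.mod_eq_of_lt hib, Nat.mod_eq_of_lt hib'] at hii
    subst hii
    have : b * j = b * j' := by omega
    have : j = j' := Nat.eq_of_mul_eq_mul_left (by omega) this
    simp [this]
  rcases hsub.eq_empty_or_singleton with h|⟨x, h⟩ <;> simp [lcount, h]

lemma lcount_iter (a b c k : ℕ) (ha : 2 ≤ a) (hb : 2 ≤ b) (hab : Nat.Coprime a b)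
    (hc : 0 < c) : lcount a b (c + k * (a * b)) = lcount a b c + k := by
  induction k with
  | zero => simp
  | succ n ih =>
    have h1 : c + (n + 1) * (a * b) = (c + n * (a * b)) + a * b := by ring
    rw [h1, lcount_step a b _ ha hb hab (by positivity), ih]
    omega

theorem stmt_5 (a b r : ℕ) (ha : 2 ≤ a) (hb : 2 ≤ b) (hab : Nat.Coprime a b) (hr : 1 ≤ r) :
    {m : ℕ | 0 < m ∧ lcount a b m = r}.ncard = a * b := by
  set N := a * b with hN0
  have hN : 0 < N := by positivity
  set g : ℕ → ℕ := fun c => (c + 1) + (r - lcount a b (c + 1)) * N with hg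
  have key : {m : ℕ | 0 < m ∧ lcount a b m = r} = ↑((Finset.range N).image g) := by
    ext m
    simp only [Set.mem_setOf_eq, Finset.coe_image, Finset.coe_range, Set.mem_image,
      Set.mem_Iio]
    constructor
    · rintro ⟨hm, hlm⟩
      refine ⟨(m - 1) % N, Nat.mod_lt _ hN, ?_⟩
      have hmck : m = ((m - 1) % N + 1) + ((m - 1) / N) * N := by
        have h1 : N * ((m - 1) / N) + (m - 1) % N = m - 1 := Nat.div_add_mod (m - 1) N
        have h2 : N * ((m - 1) / N) = ((m - 1) / N) * N := by ring
        omega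
      set c := (m - 1) % N + 1 with hcdef
      set k := (m - 1) / N with hkdef
      have hc1 : 1 ≤ c := by omega
      have hcN : c ≤ N := by have := Nat.mod_lt (m - 1) hN; omega
      have hlck : lcount a b m = lcount a b c + k := by
        rw [hmck]; exact lcount_iter a b c k ha hb hab (by omega)
      have hlc : lcount a b c ≤ 1 := lcount_le_one a b c ha hb hab hcN
      show c + (r - lcount a b c) * N = m
      have hk : r - lcount a b c = k := by omega
      rw [hk]; omega
    · rintro ⟨c', hc', rfl⟩
      have hcN : c' + 1 ≤ N := by omega
      have hlc : lcount a b (c' + 1) ≤ 1 := lcount_le_one a b (c' + 1) ha hb hab hcN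
      have hlcr : lcount a b (c' + 1) ≤ r := le_trans hlc hr
      constructor
      · show 0 < (c' + 1) + (r - lcount a b (c' + 1)) * N
        omega
      · show lcount a b ((c' + 1) + (r - lcount a b (c' + 1)) * N) = r
        rw [lcount_iter a b _ _ ha hb hab (by omega)]
        omega
  rw [key, Set.ncard_coe_finset, Finset.card_image_of_injOn, Finset.card_range]
  intro c₁ h1 c₂ h2 he
  simp only [Finset.coe_range, Set.mem_Iio] at h1 h2
  have key2 : ∀ c, c < N → (g c - 1) % N = c := by
    intro c hc
    have h3 : g c - 1 = c + (r - lcount a b (c + 1)) * N := by simp only [hg]; omega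
    rw [h3, Nat.add_mul_mod_self_right, Nat.mod_eq_of_lt hc]
  have e1 := key2 c₁ h1
  have e2 := key2 c₂ h2
  rw [he] at e1
  omega
end

section
/- Let a, b ≥ 2 be coprime integers and r ≥ 0. Then the cardinality of S(a,b,r) = {m ∈ ℤ_{>0} : ℓ(a,b,m) ≤ r} equals r·a·b + (a + b − 1) + (a−1)(b−1)/2. -/
open Set

section Aux

variable {a b : ℕ}

private lemma rep_of_big (ha : 2 ≤ a) (hb : 2 ≤ b) (hab : Nat.Coprime a b)
    {n : ℕ} (h : a * b - a - b < n) : ∃ i j : ℕ, a * i + b * j = n := by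
  have H := frobeniusNumber_pair hab (by omega) (by omega)
  by_contra hn
  have hmem : n ∉ AddSubmonoid.closure ({a, b} : Set ℕ) := by
    intro hmem
    rw [AddSubmonoid.mem_closure_pair] at hmem
    obtain ⟨x, y, hxy⟩ := hmem
    exact hn ⟨x, y, by simpa [smul_eq_mul, mul_comm] using hxy⟩
  exact absurd (H.2 hmem) (not_le.mpr h)

private lemma not_rep_both (ha : 2 ≤ a) (hb : 2 ≤ b) (hab : Nat.Coprime a b) {n : ℕ}
    (hn : n ≤ a * b - a - b)
    (h1 : ∃ i j : ℕ, a * i + b * j = n)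
    (h2 : ∃ i j : ℕ, a * i + b * j = a * b - a - b - n) : False := by
  have hmn : a + b ≤ a * b := Nat.add_le_mul ha hb
  obtain ⟨i, j, hij⟩ := h1
  obtain ⟨i', j', hij'⟩ := h2
  have key : (i + i' + 1) * a + (j + j' + 1) * b = a * b := by
    have h5 : a ≤ a * b := by omega
    have h6 : b ≤ a * b - a := by omega
    zify [hn, h5, h6] at hij hij' ⊢
    linear_combination hij + hij'

  exact hab.mul_add_mul_ne_mul (Nat.add_one_ne_zero _) (Nat.add_one_ne_zero _) key

private lemma rep_sub (ha : 2 ≤ a) (hb : 2 ≤ b) (hab : Nat.Coprime a b) {n : ℕ}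
    (hn : n ≤ a * b - a - b) (h : ¬ ∃ i j : ℕ, a * i + b * j = n) :
    ∃ i j : ℕ, a * i + b * j = a * b - a - b - n := by
  have hmn : a + b ≤ a * b := Nat.add_le_mul ha hb
  obtain ⟨i, j, hij⟩ := rep_of_big ha hb hab (n := n + a * b) (by omega)
  have hib : i < b := by
    by_contra hi
    push_neg at hi
    refine h ⟨i - b, j, ?_⟩
    zify [hi] at hij ⊢
    linear_combination hij
  have hja : j < a := by
    by_contra hj
    push_neg at hj
    refine h ⟨i, j - a, ?_⟩
    zify [hj] at hij ⊢
    linear_combination hij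
  refine ⟨b - 1 - i, a - 1 - j, ?_⟩
  have h1 : i ≤ b - 1 := by omega
  have h2 : j ≤ a - 1 := by omega
  have h3 : (1 : ℕ) ≤ b := by omega
  have h4 : (1 : ℕ) ≤ a := by omega
  have h5 : a ≤ a * b := by omega
  have h6 : b ≤ a * b - a := by omega
  zify [h1, h2, h3, h4, h5, h6, hn] at hij ⊢
  linear_combination -hij

private lemma card_nonrep (ha : 2 ≤ a) (hb : 2 ≤ b) (hab : Nat.Coprime a b) :
    2 * {n : ℕ | ¬ ∃ i j : ℕ, a * i + b * j = n}.ncard = (a - 1) * (b - 1) := by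
  classical
  have hmn : a + b ≤ a * b := Nat.add_le_mul ha hb
  have hset : {n : ℕ | ¬ ∃ i j : ℕ, a * i + b * j = n}
      = ↑((Finset.range (a * b - a - b + 1)).filter fun n => ¬ ∃ i j : ℕ, a * i + b * j = n) := by
    ext n
    simp only [Finset.coe_filter, Finset.mem_range, mem_setOf_eq]
    constructor
    · intro h
      refine ⟨?_, h⟩
      by_contra hlt
      push_neg at hlt
      exact h (rep_of_big ha hb hab (by omega))
    · exact fun h => h.2
  rw [hset, ncard_coe_finset]
  have hbij : ((Finset.range (a * b - a - b + 1)).filter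
        (fun n => ¬ ∃ i j : ℕ, a * i + b * j = n)).card
      = ((Finset.range (a * b - a - b + 1)).filter
        (fun n => ∃ i j : ℕ, a * i + b * j = n)).card := by
    apply Finset.card_nbij' (fun n => a * b - a - b - n) (fun n => a * b - a - b - n)
    · intro n hn
      simp only [Finset.mem_coe, Finset.mem_filter, Finset.mem_range] at hn ⊢
      exact ⟨by omega, rep_sub ha hb hab (by omega) hn.2⟩
    · intro n hn
      simp only [Finset.mem_coe, Finset.mem_filter, Finset.mem_range] at hn ⊢
      refine ⟨by omega, fun h => not_rep_both ha hb hab (n := n) (by omega) hn.2 h⟩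
    · intro n hn
      simp only [Finset.mem_coe, Finset.mem_filter, Finset.mem_range] at hn ⊢
      omega
    · intro n hn
      simp only [Finset.mem_coe, Finset.mem_filter, Finset.mem_range] at hn ⊢
      omega
  have hcount := Finset.card_filter_add_card_filter_not
    (s := Finset.range (a * b - a - b + 1)) (p := fun n => ∃ i j : ℕ, a * i + b * j = n)
  rw [Finset.card_range] at hcount
  have hfact : (a - 1) * (b - 1) = a * b - a - b + 1 := by
    have h4 : (1 : ℕ) ≤ a := by omega
    have h3 : (1 : ℕ) ≤ b := by omega
    have h5 : a ≤ a * b := by omega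
    have h6 : b ≤ a * b - a := by omega
    zify [h3, h4, h5, h6]
    ring
  omega

private lemma lcount_le_iff (ha : 2 ≤ a) (hb : 2 ≤ b) (hab : Nat.Coprime a b) (r m K : ℕ)
    (hK : K = a + b + r * (a * b)) :
    lcount a b m ≤ r ↔ ¬ ∃ i j : ℕ, a * i + b * j + K = m := by
  classical
  constructor
  · rintro hle ⟨i, j, hij⟩
    set T := (Finset.range (r + 1)).image (fun t => (i + (r - t) * b + 1, j + 1 + t * a)) with hT
    have hTcard : T.card = r + 1 := by
      rw [hT, Finset.card_image_of_injOn, Finset.card_range]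
      intro s hs t ht hst
      have h2 := congrArg Prod.snd hst
      simp only at h2
      have : s * a = t * a := by omega
      exact Nat.eq_of_mul_eq_mul_right (by omega) this
    have hsub : ↑T ⊆ {q : ℕ × ℕ | 0 < q.1 ∧ 0 < q.2 ∧ a * q.1 + b * q.2 = m} := by
      intro q hq
      simp only [hT, Finset.coe_image, Finset.coe_range, mem_image, mem_Iio] at hq
      obtain ⟨t, ht, rfl⟩ := hq
      have htr : t ≤ r := by omega
      refine ⟨?_, ?_, ?_⟩ <;> dsimp only
      · omega
      · omega
      · subst hK
        zify [htr] at hij ⊢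
        linear_combination hij
    have hfin : {q : ℕ × ℕ | 0 < q.1 ∧ 0 < q.2 ∧ a * q.1 + b * q.2 = m}.Finite := by
      apply Set.Finite.subset ((Set.finite_Iic m).prod (Set.finite_Iic m))
      rintro ⟨x, y⟩ ⟨hx, hy, hxy⟩
      dsimp only at hx hy hxy
      have h1 : x ≤ a * x := Nat.le_mul_of_pos_left x (by omega)
      have h2 : y ≤ b * y := Nat.le_mul_of_pos_left y (by omega)
      exact ⟨by simp only [mem_Iic]; omega, by simp only [mem_Iic]; omega⟩
    have hle2 := Set.ncard_le_ncard hsub hfin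
    rw [ncard_coe_finset, hTcard] at hle2
    have : lcount a b m = {q : ℕ × ℕ | 0 < q.1 ∧ 0 < q.2 ∧ a * q.1 + b * q.2 = m}.ncard := rfl
    omega
  · intro h
    have hmt : ∀ q ∈ {q : ℕ × ℕ | 0 < q.1 ∧ 0 < q.2 ∧ a * q.1 + b * q.2 = m},
        (fun q : ℕ × ℕ => (q.1 - 1) / b) q ∈ ((Finset.range r : Finset ℕ) : Set ℕ) := by
      rintro ⟨x, y⟩ ⟨hx, hy, hxy⟩
      dsimp only at hx hy hxy ⊢
      have hxb : x ≤ r * b := by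
        by_contra hxb
        push_neg at hxb
        refine h ⟨x - (r * b + 1), y - 1, ?_⟩
        subst hK
        zify [show r * b + 1 ≤ x from hxb, show 1 ≤ y from hy] at hxy ⊢
        linear_combination hxy
      simp only [Finset.coe_range, mem_Iio, Finset.mem_range]
      rw [Nat.div_lt_iff_lt_mul (by omega : 0 < b)]
      have hcomm : b * r = r * b := Nat.mul_comm b r
      omega
    have hinj : Set.InjOn (fun q : ℕ × ℕ => (q.1 - 1) / b)
        {q : ℕ × ℕ | 0 < q.1 ∧ 0 < q.2 ∧ a * q.1 + b * q.2 = m} := by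
      rintro ⟨x, y⟩ ⟨hx, hy, hxy⟩ ⟨x', y'⟩ ⟨hx', hy', hxy'⟩ hg
      dsimp only at hx hy hxy hx' hy' hxy' hg
      have hco : IsCoprime (b : ℤ) (a : ℤ) := Nat.isCoprime_iff_coprime.mpr hab.symm
      have hdvd : (b : ℤ) ∣ (a : ℤ) * ((x : ℤ) - x') := by
        refine ⟨(y' : ℤ) - y, ?_⟩
        have e1 : (a : ℤ) * x + b * y = m := by exact_mod_cast hxy
        have e2 : (a : ℤ) * x' + b * y' = m := by exact_mod_cast hxy'
        linear_combination e1 - e2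
      obtain ⟨k, hk⟩ := hco.dvd_of_dvd_mul_left hdvd
      have e1 := Nat.div_add_mod (x - 1) b
      have e2 := Nat.div_add_mod (x' - 1) b
      have m1 : (x - 1) % b < b := Nat.mod_lt _ (by omega)
      have m2 : (x' - 1) % b < b := Nat.mod_lt _ (by omega)
      rw [hg] at e1
      have ebd : (x : ℤ) - x' = ((x - 1) % b : ℕ) - ((x' - 1) % b : ℕ) := by
        omega
      have hbz : (0 : ℤ) < b := by exact_mod_cast (by omega : 0 < b)
      have hk1 : (b : ℤ) * k < b * 1 := by
        rw [mul_one, ← hk]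
        rw [ebd]
        push_cast
        omega
      have hk2 : (b : ℤ) * (-1) < b * k := by
        rw [← hk, ebd]
        push_cast
        omega
      have hklt : k < 1 := lt_of_mul_lt_mul_left hk1 (le_of_lt hbz)
      have hkgt : (-1 : ℤ) < k := lt_of_mul_lt_mul_left hk2 (le_of_lt hbz)
      have hk0 : k = 0 := by omega
      rw [hk0, mul_zero] at hk
      have hxx : x = x' := by exact_mod_cast sub_eq_zero.mp hk
      have hyy : y = y' := by
        subst hxx
        have : b * y = b * y' := by omega
        exact Nat.eq_of_mul_eq_mul_left (by omega) this
      rw [Prod.mk.injEq]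
      exact ⟨hxx, hyy⟩
    have hfin' : ((Finset.range r : Finset ℕ) : Set ℕ).Finite := (Finset.range r).finite_toSet
    have hle3 := Set.ncard_le_ncard_of_injOn (t := ((Finset.range r : Finset ℕ) : Set ℕ))
      _ hmt hinj hfin'
    have hcard : ((Finset.range r : Finset ℕ) : Set ℕ).ncard = r := by
      rw [ncard_coe_finset, Finset.card_range]
    show {q : ℕ × ℕ | 0 < q.1 ∧ 0 < q.2 ∧ a * q.1 + b * q.2 = m}.ncard ≤ r
    omega

end Aux

theorem stmt_6 (a b r : ℕ) (ha : 2 ≤ a) (hb : 2 ≤ b) (hab : Nat.Coprime a b) :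
    {m : ℕ | 0 < m ∧ lcount a b m ≤ r}.ncard
      = r * a * b + (a + b - 1) + (a - 1) * (b - 1) / 2 := by
  classical
  have hmn : a + b ≤ a * b := Nat.add_le_mul ha hb
  obtain ⟨K, hK⟩ : ∃ K, K = a + b + r * (a * b) := ⟨_, rfl⟩
  have hK1 : a + b ≤ K := by omega
  have hSeq : {m : ℕ | 0 < m ∧ lcount a b m ≤ r}
      = Set.Ioo 0 K ∪ (fun n => n + K) '' {n : ℕ | ¬ ∃ i j : ℕ, a * i + b * j = n} := by
    ext m
    simp only [mem_setOf_eq, mem_union, mem_Ioo, mem_image,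
      lcount_le_iff ha hb hab r m K hK]
    constructor
    · rintro ⟨hm, hnr⟩
      by_cases hmK : m < K
      · exact Or.inl ⟨hm, hmK⟩
      · refine Or.inr ⟨m - K, ?_, by omega⟩
        rintro ⟨i, j, hij⟩
        exact hnr ⟨i, j, by omega⟩
    · rintro (⟨h1, h2⟩ | ⟨n, hn, rfl⟩)
      · refine ⟨h1, ?_⟩
        rintro ⟨i, j, hij⟩
        omega
      · refine ⟨?_, ?_⟩
        · show 0 < n + K
          omega
        · rintro ⟨i, j, hij⟩
          refine hn ⟨i, j, ?_⟩
          have hij' : a * i + b * j + K = n + K := hij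
          omega
  rw [hSeq]
  have hNRfin : {n : ℕ | ¬ ∃ i j : ℕ, a * i + b * j = n}.Finite := by
    apply Set.Finite.subset (Set.finite_Iic (a * b - a - b))
    intro n hn
    simp only [mem_Iic]
    by_contra hc
    exact hn (rep_of_big ha hb hab (by omega))
  have hdisj : Disjoint (Set.Ioo 0 K)
      ((fun n => n + K) '' {n : ℕ | ¬ ∃ i j : ℕ, a * i + b * j = n}) := by
    rw [Set.disjoint_left]
    rintro m ⟨_, h2⟩ ⟨n, _, rfl⟩
    dsimp only at h2
    omega
  rw [Set.ncard_union_eq hdisj (Set.finite_Ioo 0 K) (hNRfin.image _)]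
  rw [Set.ncard_image_of_injective _ (add_left_injective K)]
  have hIoo : (Set.Ioo 0 K).ncard = K - 1 := by
    rw [← Finset.coe_Ioo, ncard_coe_finset, Nat.card_Ioo]
    omega
  rw [hIoo]
  have h2 := card_nonrep ha hb hab
  have hra : r * a * b = r * (a * b) := by ring
  omega
end

section
/- Let a, b ≥ 2 be coprime integers and r ≥ 0. Then ℓ(a,b,(r+1)·a·b) = r, and ℓ(a,b,m) ≥ r + 1 for every integer m > (r+1)·a·b. In particular, the maximum element of S(a,b,r) is (r+1)·a·b. -/
/-!
A positive representation `a * i + b * j = m` is determined by `i`, which must satisfy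
`a * i ≡ m [MOD b]` and `a * i < m`; since `a` is invertible modulo `b`, the admissible `i` form a
single residue class modulo `b`. For `m = (r + 1) * a * b` that class is the multiples of `b`, and
`a * i < m` leaves exactly `i = b, 2b, …, rb`. For `m > (r + 1) * a * b` the class has a
representative `i₀ ∈ [1, b]`, and `i₀, i₀ + b, …, i₀ + r b` all satisfy `a * i < m`.
-/

open Set

def posReps (a b m : ℕ) : Set (ℕ × ℕ) :=
  {q | 0 < q.1 ∧ 0 < q.2 ∧ a * q.1 + b * q.2 = m}

theorem lcount_eq_ncard_posReps (a b m : ℕ) : lcount a b m = (posReps a b m).ncard := rfl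

theorem posReps_finite {a b : ℕ} (ha : 0 < a) (hb : 0 < b) (m : ℕ) :
    (posReps a b m).Finite := by
  refine ((finite_Iic m).prod (finite_Iic m)).subset ?_
  rintro ⟨i, j⟩ ⟨-, -, h : a * i + b * j = m⟩
  have hi : i ≤ a * i := Nat.le_mul_of_pos_left i ha
  have hj : j ≤ b * j := Nat.le_mul_of_pos_left j hb
  simp only [mem_prod, mem_Iic]
  omega

theorem posReps_succ_mul_mul {a b : ℕ} (ha : 0 < a) (hb : 0 < b) (hab : a.Coprime b) (r : ℕ) :
    posReps a b ((r + 1) * (a * b)) = (fun k => (b * k, a * (r + 1 - k))) '' Icc 1 r := by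
  ext ⟨i, j⟩
  simp only [posReps, mem_ofPred_eq, mem_image, mem_Icc, Prod.mk.injEq]
  constructor
  · rintro ⟨hi, hj, h⟩
    have hdvd : b ∣ a * i :=
      (Nat.dvd_add_left (dvd_mul_right b j)).mp ⟨(r + 1) * a, by rw [h]; ring⟩
    obtain ⟨k, rfl⟩ := hab.symm.dvd_of_dvd_mul_left hdvd
    have hk : a * k + j = a * (r + 1) := Nat.eq_of_mul_eq_mul_left hb (by linarith)
    have hkr : k < r + 1 := Nat.lt_of_mul_lt_mul_left (a := a) (by omega)
    refine ⟨k, ⟨Nat.pos_of_mul_pos_left hi, by omega⟩, rfl, ?_⟩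
    rw [Nat.mul_sub]
    omega
  · rintro ⟨k, ⟨hk1, hkr⟩, rfl, rfl⟩
    refine ⟨by positivity, Nat.mul_pos ha (by omega), ?_⟩
    have hk : a * (r + 1 - k) + a * k = a * (r + 1) := by
      rw [← Nat.mul_add, Nat.sub_add_cancel (by omega)]
    linear_combination b * hk

theorem lcount_succ_mul_mul {a b : ℕ} (ha : 0 < a) (hb : 0 < b) (hab : a.Coprime b) (r : ℕ) :
    lcount a b ((r + 1) * (a * b)) = r := by
  rw [lcount_eq_ncard_posReps, posReps_succ_mul_mul ha hb hab, ncard_image_of_injective,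
    ncard_Icc_nat, Nat.add_sub_cancel]
  intro k l hkl
  exact Nat.eq_of_mul_eq_mul_left hb (Prod.mk.inj hkl).1

theorem exists_mul_modEq_of_coprime {a b : ℕ} (hb : 0 < b) (hab : a.Coprime b) (m : ℕ) :
    ∃ i, 0 < i ∧ i ≤ b ∧ a * i ≡ m [MOD b] := by
  have : NeZero b := ⟨hb.ne'⟩
  set x : ZMod b := (a : ZMod b)⁻¹ * m
  -- shifting by one puts the representative in `[1, b]` rather than `[0, b)`
  refine ⟨(x - 1).val + 1, Nat.succ_pos _, (x - 1).val_lt, ?_⟩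
  rw [← ZMod.natCast_eq_natCast_iff]
  push_cast
  rw [ZMod.natCast_zmod_val, sub_add_cancel, ← mul_assoc,
    ZMod.mul_inv_of_unit _ ((ZMod.isUnit_iff_coprime a b).mpr hab), one_mul]

theorem succ_le_lcount_of_succ_mul_mul_lt {a b : ℕ} (ha : 0 < a) (hb : 0 < b) (hab : a.Coprime b)
    {r m : ℕ} (hm : (r + 1) * (a * b) < m) : r + 1 ≤ lcount a b m := by
  obtain ⟨i₀, hi₀, hi₀b, hmod⟩ := exists_mul_modEq_of_coprime hb hab m
  have hai₀ : a * i₀ ≤ a * b := Nat.mul_le_mul_left a hi₀b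
  have hle : a * i₀ ≤ m := by nlinarith
  obtain ⟨c, hc⟩ := (Nat.modEq_iff_dvd' hle).mp hmod
  replace hc : m = a * i₀ + b * c := by omega
  have hcr : r * a < c := Nat.lt_of_mul_lt_mul_left (a := b) (by linarith)
  have hmaps : ∀ t ∈ Iio (r + 1), (i₀ + t * b, c - t * a) ∈ posReps a b m := by
    intro t ht
    have hta : t * a < c := lt_of_le_of_lt (Nat.mul_le_mul_right a (Nat.lt_succ_iff.mp ht)) hcr
    refine ⟨by omega, by omega, ?_⟩
    zify [hta.le] at hc ⊢
    linear_combination -hc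
  have hinj : InjOn (fun t => (i₀ + t * b, c - t * a)) (Iio (r + 1)) := fun t _ s _ hts =>
    Nat.eq_of_mul_eq_mul_right hb (Nat.add_left_cancel (Prod.mk.inj hts).1)
  rw [lcount_eq_ncard_posReps]
  simpa using ncard_le_ncard_of_injOn _ hmaps hinj (posReps_finite ha hb m)

theorem stmt_7 (a b r : ℕ) (ha : 2 ≤ a) (hb : 2 ≤ b) (hab : Nat.Coprime a b) :
    lcount a b ((r + 1) * (a * b)) = r ∧
    (∀ m : ℕ, (r + 1) * (a * b) < m → r + 1 ≤ lcount a b m) ∧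
    IsGreatest {m : ℕ | 0 < m ∧ lcount a b m ≤ r} ((r + 1) * (a * b)) := by
  have ha' : 0 < a := by omega
  have hb' : 0 < b := by omega
  have hcount := lcount_succ_mul_mul ha' hb' hab r
  have hbeyond : ∀ m, (r + 1) * (a * b) < m → r + 1 ≤ lcount a b m := fun _ hm =>
    succ_le_lcount_of_succ_mul_mul_lt ha' hb' hab hm
  refine ⟨hcount, hbeyond, ⟨Nat.mul_pos r.succ_pos (Nat.mul_pos ha' hb'), hcount.le⟩, ?_⟩
  rintro m ⟨-, hm⟩
  by_contra! h
  have := hbeyond m h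
  omega
end

section
/- (Sylvester) Let a, b ≥ 2 be coprime integers. The number of nonnegative integers n that are NOT of the form a·i + b·j with i, j ≥ 0 equals (a−1)(b−1)/2. -/
/-!
Let `N = a * b - a - b`, the Frobenius number of `{a, b}` (`frobeniusNumber_pair`), so that every
non-representable number lies in `[0, N]`. For `n ≤ N` exactly one of `n` and `N - n` is
representable: not both, since their sum `N` is not; and if `n = a x + b y` with `0 ≤ x < b` is not
representable, then `y < 0` and `N - n = a (b - 1 - x) + b (-y - 1)` is. So `n ↦ N - n` exchanges
the gaps in `[0, N]` with the representable numbers there, and there are `(N + 1) / 2` gaps.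
-/

open Set

open Finset in
theorem Finset.two_mul_card_filter_range_succ_eq (p : ℕ → Prop) [DecidablePred p] (N : ℕ)
    (hp : ∀ n ≤ N, p (N - n) ↔ ¬ p n) : 2 * #{n ∈ range (N + 1) | p n} = N + 1 := by
  have hreflect := sum_range_reflect (fun n ↦ if p n then 1 else 0) (N + 1)
  simp only [add_tsub_cancel_right] at hreflect
  calc 2 * #{n ∈ range (N + 1) | p n}
      = ∑ n ∈ range (N + 1), ((if p (N - n) then 1 else 0) + if p n then 1 else 0) := by
        rw [sum_add_distrib, hreflect, card_filter, two_mul]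
    _ = ∑ _n ∈ range (N + 1), 1 := by
        refine sum_congr rfl fun n hn ↦ ?_
        by_cases h : p n <;> simp [hp n (Nat.lt_succ_iff.mp (mem_range.mp hn)), h]
    _ = N + 1 := by simp

theorem Int.exists_mul_add_mul_eq_of_isCoprime {a b : ℤ} (hab : IsCoprime a b) (hb : 0 < b)
    (n : ℤ) : ∃ x y, 0 ≤ x ∧ x < b ∧ a * x + b * y = n := by
  obtain ⟨u, v, huv⟩ := hab
  refine ⟨n * u % b, n * v + a * (n * u / b), emod_nonneg _ hb.ne', emod_lt_of_pos _ hb, ?_⟩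
  linear_combination n * huv + a * emod_add_mul_ediv (n * u) b

namespace Nat

theorem mem_closure_pair_iff {a b n : ℕ} :
    n ∈ AddSubmonoid.closure ({a, b} : Set ℕ) ↔ ∃ i j, a * i + b * j = n := by
  simp only [AddSubmonoid.mem_closure_pair, smul_eq_mul, mul_comm]

theorem sub_mem_closure_pair_of_notMem {a b n : ℕ} (hab : Coprime a b) (hb : 0 < b)
    (hn : n ∉ AddSubmonoid.closure ({a, b} : Set ℕ)) :
    a * b - a - b - n ∈ AddSubmonoid.closure ({a, b} : Set ℕ) := by
  obtain ⟨x, y, hx0, hxb, hxy⟩ := Int.exists_mul_add_mul_eq_of_isCoprime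
    (isCoprime_iff_coprime.mpr hab) (by exact_mod_cast hb) n
  lift x to ℕ using hx0
  obtain ⟨k, rfl⟩ : ∃ k, y = Int.negSucc k := by
    refine Int.eq_negSucc_of_lt_zero (not_le.mp fun hy ↦ hn ?_)
    lift y to ℕ using hy
    exact mem_closure_pair_iff.mpr ⟨x, y, by exact_mod_cast hxy⟩
  have hax : a * x = n + b * (k + 1) := by
    rw [Int.negSucc_eq] at hxy
    zify
    linarith
  obtain ⟨c, rfl⟩ : ∃ c, b = x + 1 + c := ⟨b - (x + 1), by omega⟩
  rw [mem_closure_pair_iff]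
  refine ⟨c, k, ?_⟩
  have : a * (x + 1 + c) = a * x + a + a * c := by ring
  have : (x + 1 + c) * (k + 1) = (x + 1 + c) * k + (x + 1 + c) := by ring
  omega

theorem sub_mem_closure_pair_iff_notMem {a b n : ℕ} (hab : Coprime a b) (ha : 1 < a) (hb : 1 < b)
    (hn : n ≤ a * b - a - b) :
    a * b - a - b - n ∈ AddSubmonoid.closure ({a, b} : Set ℕ) ↔
      n ∉ AddSubmonoid.closure ({a, b} : Set ℕ) := by
  have hF := frobeniusNumber_iff.mp (frobeniusNumber_pair hab ha hb)
  refine ⟨fun hsub hmem ↦ hF.1 ?_, sub_mem_closure_pair_of_notMem hab (by omega)⟩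
  simpa [Nat.sub_add_cancel hn] using add_mem hsub hmem

end Nat

theorem stmt_14 (a b : ℕ) (ha : 2 ≤ a) (hb : 2 ≤ b) (hab : Nat.Coprime a b) :
    {n : ℕ | ¬ ∃ i j : ℕ, a * i + b * j = n}.ncard = (a - 1) * (b - 1) / 2 := by
  classical
  set S := AddSubmonoid.closure ({a, b} : Set ℕ)
  set N := a * b - a - b
  have hN : N + 1 = (a - 1) * (b - 1) := by
    have := add_le_mul ha hb
    rw [Nat.sub_one_mul, Nat.mul_sub_one]
    omega
  have hbig := (frobeniusNumber_iff.mp (frobeniusNumber_pair hab ha hb)).2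
  have hset : {n : ℕ | ¬ ∃ i j : ℕ, a * i + b * j = n} = ↑{n ∈ Finset.range (N + 1) | n ∉ S} := by
    ext n
    simp only [Set.mem_ofPred_eq, Finset.coe_filter, Finset.mem_range, ← Nat.mem_closure_pair_iff]
    exact ⟨fun h ↦ ⟨Nat.lt_succ_of_le (not_lt.mp fun hn ↦ h (hbig n hn)), h⟩, And.right⟩
  have hcount := Finset.two_mul_card_filter_range_succ_eq (· ∉ S) N fun n hn ↦
    (Nat.sub_mem_closure_pair_iff_notMem hab ha hb hn).not
  rw [hset, ncard_coe_finset]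
  omega
end

section
/- Let k be a commutative ring and a, b ≥ 2 coprime integers. The k-algebra homomorphism k[x,y] → k[t] sending x ↦ t^a and y ↦ t^b has kernel the principal ideal (y^a − x^b), and its image is the k-subalgebra of k[t] generated by t^a and t^b. Consequently k[x,y]/(y^a − x^b) ≅ k[t^a, t^b] ⊆ k[t]. -/
open Polynomial

theorem arith (a b i j m j' : ℕ) (hab : Nat.Coprime a b) (hj : j < a) (hj' : j' < a)
    (h : a * i + b * j = a * m + b * j') : j = j' ∧ i = m := by
  have h1 : b * j ≡ b * j' [MOD a] := by
    unfold Nat.ModEq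
    calc b * j % a = (b * j + a * i) % a := (Nat.add_mul_mod_self_left _ _ _).symm
    _ = (b * j' + a * m) % a := by rw [show b*j + a*i = b*j' + a*m by omega]
    _ = b * j' % a := Nat.add_mul_mod_self_left _ _ _
  have h2 : j ≡ j' [MOD a] := h1.cancel_left_of_coprime hab
  have hjj : j = j' := by
    have := h2; unfold Nat.ModEq at this
    rwa [Nat.mod_eq_of_lt hj, Nat.mod_eq_of_lt hj'] at this
  refine ⟨hjj, ?_⟩
  subst hjj
  have ha : 0 < a := by omega
  exact Nat.eq_of_mul_eq_mul_left ha (by omega)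

-- key coefficient formula
theorem coeff_psi (k : Type*) [CommRing k] (a b : ℕ) (ha : 0 < a) (hab : Nat.Coprime a b)
    (q : Polynomial (Polynomial k)) (hq : q.degree < a) (j : ℕ) (hj : j < a) (i : ℕ) :
    (Polynomial.aevalTower (Polynomial.expand k a) ((X : k[X]) ^ b) q).coeff (a * i + b * j)
      = (q.coeff j).coeff i := by
  have hrw : Polynomial.aevalTower (Polynomial.expand k a) ((X : k[X]) ^ b) q
      = ∑ j' ∈ q.support, Polynomial.expand k a (q.coeff j') * X ^ (b * j') := by
    conv_lhs => rw [Polynomial.aevalTower, Polynomial.eval₂AlgHom_apply, Polynomial.eval₂_eq_sum,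
      Polynomial.sum_def]
    refine Finset.sum_congr rfl fun j' _ => ?_
    rw [← pow_mul]; rfl
  rw [hrw, Polynomial.finset_sum_coeff]
  rw [Finset.sum_eq_single j]
  · rw [Polynomial.coeff_mul_X_pow', if_pos (by omega), Nat.add_sub_cancel,
      Polynomial.coeff_expand ha, if_pos ⟨i, by ring⟩, Nat.mul_div_cancel_left _ ha]
  · intro j' hj' hne
    have hj'a : j' < a := by
      have := Polynomial.le_degree_of_mem_supp _ hj'
      have := this.trans_lt hq
      exact_mod_cast this
    rw [Polynomial.coeff_mul_X_pow']
    split_ifs with h1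
    · rw [Polynomial.coeff_expand ha]
      split_ifs with h2
      · exfalso
        obtain ⟨m, hm⟩ := h2
        have : a * i + b * j = a * m + b * j' := by omega
        exact hne ((arith a b i j m j' hab hj hj'a this).1.symm)
      · rfl
    · rfl
  · intro hjs
    rw [Polynomial.notMem_support_iff.mp hjs]
    simp

theorem psi_inj (k : Type*) [CommRing k] (a b : ℕ) (ha : 0 < a) (hab : Nat.Coprime a b)
    (q : Polynomial (Polynomial k)) (hq : q.degree < a)
    (h : Polynomial.aevalTower (Polynomial.expand k a) ((X : k[X]) ^ b) q = 0) : q = 0 := by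
  ext j i
  by_cases hj : j < a
  · have := coeff_psi k a b ha hab q hq j hj i
    rw [h] at this
    simpa using this.symm
  · rw [Polynomial.coeff_eq_zero_of_degree_lt (hq.trans_le (by exact_mod_cast Nat.le_of_not_lt hj))]
    simp

theorem ker_psi (k : Type*) [CommRing k] (a b : ℕ) (ha : 2 ≤ a) (hab : Nat.Coprime a b) :
    RingHom.ker (Polynomial.aevalTower (Polynomial.expand k a) ((X : k[X]) ^ b)).toRingHom
      = Ideal.span {(X : Polynomial (Polynomial k)) ^ a - C ((X : k[X]) ^ b)} := by
  rcases subsingleton_or_nontrivial k with hk | hk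
  · have : Subsingleton (Polynomial (Polynomial k)) := inferInstance
    ext x
    simp [Subsingleton.elim x 0, RingHom.mem_ker]
  have ha0 : 0 < a := by omega
  set p : Polynomial (Polynomial k) := (X : Polynomial (Polynomial k)) ^ a - C ((X : k[X]) ^ b)
    with hp
  have hmonic : p.Monic := Polynomial.monic_X_pow_sub_C _ (by omega)
  have hdeg : p.degree = a := Polynomial.degree_X_pow_sub_C ha0 _
  set Ψ := Polynomial.aevalTower (Polynomial.expand k a) ((X : k[X]) ^ b) with hΨ
  have hΨp : Ψ p = 0 := by
    have h1 : Ψ p = ((X : k[X]) ^ b) ^ a - Polynomial.expand k a ((X : k[X]) ^ b) := by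
      rw [hp, map_sub, map_pow, Polynomial.aevalTower_X, Polynomial.aevalTower_C]
    rw [h1, map_pow, Polynomial.expand_X, ← pow_mul, ← pow_mul, mul_comm, sub_self]
  apply le_antisymm
  · intro q hq
    rw [RingHom.mem_ker] at hq
    have hdiv := Polynomial.modByMonic_add_div q p
    have hmod : Ψ (q %ₘ p) = 0 := by
      have h2 : Ψ (q %ₘ p) + Ψ p * Ψ (q /ₘ p) = Ψ q := by rw [← map_mul, ← map_add, hdiv]
      rw [hΨp, zero_mul, add_zero] at h2
      rw [h2]; exact hq
    have hmdeg : (q %ₘ p).degree < a := by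
      rw [← hdeg]; exact Polynomial.degree_modByMonic_lt q hmonic
    have hz := psi_inj k a b ha0 hab _ hmdeg hmod
    rw [Ideal.mem_span_singleton]
    exact ⟨q /ₘ p, by conv_lhs => rw [← hdiv, hz, zero_add]⟩
  · rw [Ideal.span_le, Set.singleton_subset_iff]
    exact hΨp

noncomputable def Eiso (k : Type*) [CommRing k] :
    MvPolynomial (Fin 2) k ≃ₐ[k] Polynomial (Polynomial k) :=
  (MvPolynomial.renameEquiv k (Equiv.swap 0 1)).trans
    ((MvPolynomial.finSuccEquiv k 1).trans
      (Polynomial.mapAlgEquiv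
        ((MvPolynomial.finSuccEquiv k 0).trans
          (Polynomial.mapAlgEquiv (MvPolynomial.isEmptyAlgEquiv k (Fin 0))))))

theorem Eiso_X0 (k : Type*) [CommRing k] :
    Eiso k (MvPolynomial.X 0) = C (X : k[X]) := by
  simp only [Eiso, AlgEquiv.trans_apply, MvPolynomial.renameEquiv_apply,
    MvPolynomial.rename_X, Equiv.swap_apply_left]
  rw [show (1 : Fin 2) = Fin.succ 0 from rfl, MvPolynomial.finSuccEquiv_X_succ]
  simp [Polynomial.mapAlgEquiv, MvPolynomial.finSuccEquiv_X_zero]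

theorem Eiso_X1 (k : Type*) [CommRing k] :
    Eiso k (MvPolynomial.X 1) = (X : Polynomial (Polynomial k)) := by
  simp only [Eiso, AlgEquiv.trans_apply, MvPolynomial.renameEquiv_apply,
    MvPolynomial.rename_X, Equiv.swap_apply_right]
  rw [MvPolynomial.finSuccEquiv_X_zero]
  simp [Polynomial.mapAlgEquiv]

theorem stmt_16 (k : Type*) [CommRing k] (a b : ℕ) (ha : 2 ≤ a) (hb : 2 ≤ b)
    (hab : Nat.Coprime a b)
    (φ : MvPolynomial (Fin 2) k →ₐ[k] k[X])
    (hφ : φ = MvPolynomial.aeval ![(X : k[X]) ^ a, (X : k[X]) ^ b]) :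
    RingHom.ker φ.toRingHom
        = Ideal.span {(MvPolynomial.X 1 : MvPolynomial (Fin 2) k) ^ a
            - (MvPolynomial.X 0) ^ b} ∧
    φ.range = Algebra.adjoin k {(X : k[X]) ^ a, (X : k[X]) ^ b} ∧
    Nonempty ((MvPolynomial (Fin 2) k ⧸
        Ideal.span {(MvPolynomial.X 1 : MvPolynomial (Fin 2) k) ^ a
          - (MvPolynomial.X 0) ^ b})
      ≃ₐ[k] Algebra.adjoin k {(X : k[X]) ^ a, (X : k[X]) ^ b}) := by
  set Ψ := Polynomial.aevalTower (Polynomial.expand k a) ((X : k[X]) ^ b) with hΨ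
  set g : MvPolynomial (Fin 2) k :=
    (MvPolynomial.X 1 : MvPolynomial (Fin 2) k) ^ a - (MvPolynomial.X 0) ^ b with hg
  have hEg : Eiso k g = (X : Polynomial (Polynomial k)) ^ a - C ((X : k[X]) ^ b) := by
    rw [hg, map_sub, map_pow, map_pow, Eiso_X0, Eiso_X1, ← Polynomial.C_pow]
  have hcomp : ∀ x, φ x = Ψ (Eiso k x) := by
    have : φ = (Ψ.comp (Eiso k).toAlgHom) := by
      apply MvPolynomial.algHom_ext
      intro i
      fin_cases i
      · show φ (MvPolynomial.X 0) = Ψ (Eiso k (MvPolynomial.X 0))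
        rw [hφ, Eiso_X0, hΨ, Polynomial.aevalTower_C, Polynomial.expand_X,
          MvPolynomial.aeval_X]
        simp
      · show φ (MvPolynomial.X 1) = Ψ (Eiso k (MvPolynomial.X 1))
        rw [hφ, Eiso_X1, hΨ, Polynomial.aevalTower_X, MvPolynomial.aeval_X]
        simp
    intro x; rw [this]; rfl
  have h1 : RingHom.ker φ.toRingHom = Ideal.span {g} := by
    have hker : RingHom.ker φ.toRingHom
        = Ideal.comap (Eiso k).toRingEquiv.toRingHom (RingHom.ker Ψ.toRingHom) := by
      ext x
      simp only [RingHom.mem_ker, Ideal.mem_comap, RingHom.mem_ker]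
      show φ x = 0 ↔ Ψ ((Eiso k) x) = 0
      rw [hcomp x]
    rw [hker, ker_psi k a b ha hab, ← hEg]
    rw [show (Ideal.span {Eiso k g} : Ideal (Polynomial (Polynomial k)))
        = Ideal.map (Eiso k).toRingEquiv.toRingHom (Ideal.span {g}) by
      rw [Ideal.map_span, Set.image_singleton]; rfl]
    exact Ideal.comap_map_of_bijective _ (Eiso k).bijective
  have h2 : φ.range = Algebra.adjoin k {(X : k[X]) ^ a, (X : k[X]) ^ b} := by
    rw [hφ, ← Algebra.adjoin_range_eq_range_aeval]
    congr 1
    ext y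
    simp [Fin.exists_fin_two]
    tauto
  refine ⟨h1, h2, ?_⟩
  have hker' : Ideal.span {g} = RingHom.ker φ.rangeRestrict := by
    rw [AlgHom.ker_rangeRestrict, ← h1]; rfl
  exact ⟨(Ideal.quotientEquivAlgOfEq k hker').trans
    ((Ideal.quotientKerAlgEquivOfSurjective φ.rangeRestrict_surjective).trans
      (Subalgebra.equivOfEq _ _ h2))⟩
end
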